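/- Let F be a partially additive field such that (1) no dimensionful element has a power that is dimensionless (for all n ≥ 1, a dimensionful implies aⁿ dimensionful), and (2) for all n ≥ 1, if two non-zero dimensionful elements b, b' are summable and b has an n-th root in Q, then b' also has an n-th root in Q. Then the multiplicative group of non-zero dimensionless elements is divisible. -/

import Mathlib

/-- A partially additive field: partial addition (modeled via `Option`, `none` = undefined),
total multiplication, per-element zeros, etc. -/
structure PAF (Q : Type*) where
  add : Q → Q → Option Q
  mul : Q → Q → Q
  zero : Q → Q
  one : Q
  neg : Q → Q
  inv : Q → Q
  add_comm : ∀ a b, add a b = add b a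
  mul_comm : ∀ a b, mul a b = mul b a
  add_assoc : ∀ a b c, (add a b).bind (fun x => add x c) = (add b c).bind (fun x => add a x)
  mul_assoc : ∀ a b c, mul (mul a b) c = mul a (mul b c)
  left_distrib : ∀ a b c, (add b c).map (mul a) = add (mul a b) (mul a c)
  add_zero : ∀ a, add a (zero a) = some a
  zero_unique : ∀ a z, add a z = some a → z = zero a
  mul_one : ∀ a, mul a one = a
  add_neg : ∀ a, add a (neg a) = some (zero a)
  mul_inv : ∀ a, (¬ ∃ b, a = zero b) → mul a (inv a) = one
  nontrivial : ∀ a b, a = zero b → ∃ c, (¬ ∃ d, c = zero d) ∧ a = zero c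

namespace PAF
variable {Q : Type*} (F : PAF Q)

/-- `a` is a zero element. -/
def IsZero (a : Q) : Prop := ∃ b, a = F.zero b

/-- `a` and `b` are summable (their sum is defined). -/
def Summable (a b : Q) : Prop := (F.add a b).isSome

/-- `a` is dimensionless iff it is summable with `1`. -/
def Dimensionless (a : Q) : Prop := F.Summable a F.one

/-- `n`-th power via the total multiplication. -/
def pow (a : Q) : ℕ → Q
  | 0 => F.one
  | n + 1 => F.mul a (pow a n)

end PAF

/-!
A sum `a + b` is defined exactly when `a` and `b` have the same zero, and multiplying by a
dimensionless element does not change the zero. So for a non-zero dimensionless `a` and a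
non-zero dimensionful `g`, the elements `gⁿ` (dimensionful by (1)) and `gⁿ·a` are summable,
non-zero and dimensionful. As `gⁿ` has an `n`-th root, (2) gives `r` with `rⁿ = gⁿ·a`; then
`c = r·g⁻¹` satisfies `cⁿ = a`, and `c` is dimensionless by (1) because `a` is.
-/

namespace PAF
variable {Q : Type*} (F : PAF Q)

/-- Its `npow` is `F.pow` itself, so Mathlib's power lemmas transfer definitionally. -/
abbrev toCommMonoid : CommMonoid Q where
  mul := F.mul
  one := F.one
  mul_assoc := F.mul_assoc
  one_mul a := (F.mul_comm _ _).trans (F.mul_one a)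
  mul_one := F.mul_one
  mul_comm := F.mul_comm
  npow n a := F.pow a n
  npow_zero _ := rfl
  npow_succ _ _ := F.mul_comm _ _

lemma mul_pow (x y : Q) (n : ℕ) : F.pow (F.mul x y) n = F.mul (F.pow x n) (F.pow y n) :=
  letI := F.toCommMonoid
  _root_.mul_pow x y n

lemma one_pow (n : ℕ) : F.pow F.one n = F.one :=
  letI := F.toCommMonoid
  _root_.one_pow n

lemma mul_zero (x y : Q) : F.mul x (F.zero y) = F.zero (F.mul x y) :=
  F.zero_unique _ _ <| by rw [← F.left_distrib, F.add_zero, Option.map_some]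

lemma zero_eq_of_add_eq_some {x y s : Q} (h : F.add x y = some s) : F.zero y = F.zero s := by
  apply F.zero_unique
  have := F.add_assoc x y (F.zero y)
  rwa [h, F.add_zero, Option.bind_some, Option.bind_some, h] at this

lemma zero_zero (a : Q) : F.zero (F.zero a) = F.zero a :=
  F.zero_eq_of_add_eq_some (F.add_zero a)

theorem summable_iff_zero_eq {x y : Q} : F.Summable x y ↔ F.zero x = F.zero y := by
  constructor
  · intro h
    obtain ⟨s, hs⟩ := Option.isSome_iff_exists.mp h
    rw [F.zero_eq_of_add_eq_some hs, F.zero_eq_of_add_eq_some ((F.add_comm y x).trans hs)]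
  · intro h
    -- `x·(-1) + x = 0_x = 0_y` and `0_y + y = y`, so associativity forces `x + y` to exist.
    have hneg : F.add (F.mul x (F.neg F.one)) x = some (F.zero y) := by
      have := F.left_distrib x F.one (F.neg F.one)
      rw [F.add_neg, Option.map_some, F.mul_zero, F.mul_one] at this
      rw [F.add_comm, ← this, h]
    have := F.add_assoc (F.mul x (F.neg F.one)) x y
    rw [hneg, Option.bind_some, F.add_comm, F.add_zero, eq_comm, Option.bind_eq_some_iff] at this
    obtain ⟨s, hs, -⟩ := this
    exact Option.isSome_iff_exists.mpr ⟨s, hs⟩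

theorem dimensionless_iff {a : Q} : F.Dimensionless a ↔ F.zero a = F.zero F.one :=
  F.summable_iff_zero_eq

lemma zero_mul_of_dimensionless {a : Q} (ha : F.Dimensionless a) (x : Q) :
    F.zero (F.mul x a) = F.zero x := by
  rw [← F.mul_zero, F.dimensionless_iff.mp ha, F.mul_zero, F.mul_one]

lemma dimensionless_mul_right_iff {a x : Q} (ha : F.Dimensionless a) :
    F.Dimensionless (F.mul x a) ↔ F.Dimensionless x := by
  rw [F.dimensionless_iff, F.dimensionless_iff, F.zero_mul_of_dimensionless ha]

lemma summable_mul_of_dimensionless {a : Q} (ha : F.Dimensionless a) (x : Q) :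
    F.Summable x (F.mul x a) :=
  F.summable_iff_zero_eq.mpr (F.zero_mul_of_dimensionless ha x).symm

lemma isZero_mul_left {y : Q} (x : Q) (hy : F.IsZero y) : F.IsZero (F.mul x y) := by
  obtain ⟨b, rfl⟩ := hy
  exact ⟨_, F.mul_zero x b⟩

lemma isZero_of_isZero_mul {x y : Q} (hx : ¬ F.IsZero x) (h : F.IsZero (F.mul x y)) :
    F.IsZero y := by
  have hy : F.mul (F.inv x) (F.mul x y) = y := by
    rw [← F.mul_assoc, F.mul_comm (F.inv x), F.mul_inv x hx, F.mul_comm, F.mul_one]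
  exact hy ▸ F.isZero_mul_left _ h

lemma mul_not_isZero {x y : Q} (hx : ¬ F.IsZero x) (hy : ¬ F.IsZero y) :
    ¬ F.IsZero (F.mul x y) :=
  fun h => hy (F.isZero_of_isZero_mul hx h)

lemma one_not_isZero : ¬ F.IsZero F.one := by
  rintro ⟨b, hb⟩
  obtain ⟨c, hc, hc1⟩ := F.nontrivial _ _ hb
  refine hc ⟨F.mul c c, ?_⟩
  rw [← F.mul_zero, ← hc1, F.mul_one]

lemma pow_not_isZero {x : Q} (hx : ¬ F.IsZero x) (n : ℕ) : ¬ F.IsZero (F.pow x n) := by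
  induction n with
  | zero => exact F.one_not_isZero
  | succ n ih => exact F.mul_not_isZero hx ih

lemma isZero_pow {x : Q} (hx : F.IsZero x) {n : ℕ} (hn : n ≠ 0) : F.IsZero (F.pow x n) := by
  obtain ⟨k, rfl⟩ := Nat.exists_eq_add_one_of_ne_zero hn
  rw [pow, F.mul_comm]
  exact F.isZero_mul_left _ hx

lemma exists_dimensionful_not_isZero (hdim : ∃ a : Q, ¬ F.Dimensionless a) :
    ∃ g : Q, ¬ F.Dimensionless g ∧ ¬ F.IsZero g := by
  obtain ⟨d, hd⟩ := hdim
  by_cases hz : F.IsZero d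
  · obtain ⟨b, hb⟩ := hz
    obtain ⟨c, hc, rfl⟩ := F.nontrivial _ _ hb
    refine ⟨c, fun hc' => hd ?_, hc⟩
    rwa [F.dimensionless_iff, F.zero_zero, ← F.dimensionless_iff]
  · exact ⟨d, hd, hz⟩

lemma pow_mul_inv_of_pow_eq {g r a : Q} {n : ℕ} (hg : ¬ F.IsZero g)
    (hr : F.pow r n = F.mul (F.pow g n) a) : F.pow (F.mul r (F.inv g)) n = a := by
  rw [F.mul_pow, hr, F.mul_comm (F.pow g n), F.mul_assoc, ← F.mul_pow, F.mul_inv g hg,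
    F.one_pow, F.mul_one]

end PAF

/-- If dimensionful elements have dimensionful powers and summable non-zero dimensionful elements
have the same `n`-th roots, then the group of non-zero dimensionless elements is divisible. -/
theorem dimensionless_divisible {Q : Type*} (F : PAF Q)
    (h1 : ∀ n : ℕ, 1 ≤ n → ∀ a : Q, ¬ F.Dimensionless a → ¬ F.Dimensionless (F.pow a n))
    (h2 : ∀ n : ℕ, 1 ≤ n → ∀ b b' : Q, ¬ F.Dimensionless b → ¬ F.Dimensionless b' →
      ¬ F.IsZero b → ¬ F.IsZero b' → F.Summable b b' →
      (∃ c : Q, F.pow c n = b) → ∃ c' : Q, F.pow c' n = b')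
    (hdim : ∃ a : Q, ¬ F.Dimensionless a) :
    ∀ n : ℕ, 1 ≤ n → ∀ a : Q, F.Dimensionless a → ¬ F.IsZero a →
      ∃ c : Q, F.Dimensionless c ∧ ¬ F.IsZero c ∧ F.pow c n = a := by
  intro n hn a ha ha0
  have hn0 : n ≠ 0 := Nat.one_le_iff_ne_zero.mp hn
  obtain ⟨g, hg, hg0⟩ := F.exists_dimensionful_not_isZero hdim
  have hgn : ¬ F.Dimensionless (F.pow g n) := h1 n hn g hg
  have hgn0 : ¬ F.IsZero (F.pow g n) := F.pow_not_isZero hg0 n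
  obtain ⟨r, hr⟩ := h2 n hn _ (F.mul (F.pow g n) a) hgn
    (by rwa [F.dimensionless_mul_right_iff ha]) hgn0 (F.mul_not_isZero hgn0 ha0)
    (F.summable_mul_of_dimensionless ha _) ⟨g, rfl⟩
  have hc := F.pow_mul_inv_of_pow_eq hg0 hr
  refine ⟨_, ?_, fun hc0 => ha0 (hc ▸ F.isZero_pow hc0 hn0), hc⟩
  by_contra hcd
  exact h1 n hn _ hcd (hc ▸ ha)
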